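/- Let x ∈ ℝ^{np} be k-block-sparse, let y = Ax + w with ‖w‖₂ ≤ ε, and let x̂ be a minimizer of ‖z‖_{b1} over all z with ‖y − Az‖₂ ≤ ε (the Block-Sparse Basis Pursuit). If ω₂(A,2k) > 0, then the Euclidean norm of the recovery error satisfies ‖x̂ − x‖₂ ≤ 2√(2k) ε / ω₂(A,2k). -/

import Mathlib

open MeasureTheory ProbabilityTheory Finset Matrix

/-- Euclidean norm of a finitely-indexed real vector. -/
noncomputable def vnorm {ι : Type*} [Fintype ι] (v : ι → ℝ) : ℝ :=
  Real.sqrt (∑ i, (v i) ^ 2)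

/-- Euclidean norm of the `i`-th block of `x ∈ ℝ^{np}` (blocks indexed by `Fin p`). -/
noncomputable def bnorm {n p : ℕ} (x : Fin p × Fin n → ℝ) (i : Fin p) : ℝ :=
  vnorm (fun j => x (i, j))

/-- Block-ℓ1 norm: `‖x‖_{b1} = ∑ i, ‖x_i‖₂`. -/
noncomputable def bl1 {n p : ℕ} (x : Fin p × Fin n → ℝ) : ℝ :=
  ∑ i, bnorm x i

/-- Block-ℓ∞ norm: `‖x‖_{b∞} = max_i ‖x_i‖₂`. -/
noncomputable def blinf {n p : ℕ} (x : Fin p × Fin n → ℝ) : ℝ :=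
  ⨆ i, bnorm x i

open scoped Classical in
/-- Block support: indices of nonzero blocks. -/
noncomputable def bsupp {n p : ℕ} (x : Fin p × Fin n → ℝ) : Finset (Fin p) :=
  Finset.univ.filter (fun i => ∃ j, x (i, j) ≠ 0)

/-- `ω₂(A,s) = inf { ‖Az‖₂ / ‖z‖_{b∞} : z ≠ 0, ‖z‖_{b1} ≤ s ‖z‖_{b∞} }`. -/
noncomputable def omega2 {m n p : ℕ} (A : Matrix (Fin m) (Fin p × Fin n) ℝ) (s : ℝ) : ℝ :=
  sInf {r | ∃ z : Fin p × Fin n → ℝ, z ≠ 0 ∧ bl1 z ≤ s * blinf z ∧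
    r = vnorm (A.mulVec z) / blinf z}

/-- `ω_{b∞}(AᵀA,s) = inf { ‖AᵀAz‖_{b∞} / ‖z‖_{b∞} : z ≠ 0, ‖z‖_{b1} ≤ s ‖z‖_{b∞} }`. -/
noncomputable def omegaBInf {m n p : ℕ} (A : Matrix (Fin m) (Fin p × Fin n) ℝ) (s : ℝ) : ℝ :=
  sInf {r | ∃ z : Fin p × Fin n → ℝ, z ≠ 0 ∧ bl1 z ≤ s * blinf z ∧
    r = blinf ((Aᵀ * A).mulVec z) / blinf z}

/-- Block ℓ1-constrained minimal singular value
`ρ_s(A) = inf { ‖Az‖₂ / ‖z‖₂ : z ≠ 0, ‖z‖_{b1}² ≤ s ‖z‖₂² }`. -/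
noncomputable def rhoCMSV {m n p : ℕ} (A : Matrix (Fin m) (Fin p × Fin n) ℝ) (s : ℝ) : ℝ :=
  sInf {r | ∃ z : Fin p × Fin n → ℝ, z ≠ 0 ∧ (bl1 z) ^ 2 ≤ s * (vnorm z) ^ 2 ∧
    r = vnorm (A.mulVec z) / vnorm z}

/-- Spectral norm (largest singular value) of a real matrix, as the ℓ2→ℓ2 operator norm. -/
noncomputable def specNorm {ι κ : Type*} [Fintype ι] [Fintype κ] (M : Matrix ι κ ℝ) : ℝ :=
  sSup {r | ∃ v : κ → ℝ, vnorm v ≤ 1 ∧ r = vnorm (M.mulVec v)}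

/-- The `j`-th column block (of `n` columns) of a matrix with `np` columns. -/
def colBlock {ι : Type*} {n p : ℕ} (Q : Matrix ι (Fin p × Fin n) ℝ) (j : Fin p) :
    Matrix ι (Fin n) ℝ := Matrix.of fun r c => Q r (j, c)

/-- The `l`-th row block (of `n` rows) of a matrix with `np` rows. -/
def rowBlock {κ : Type*} {n p : ℕ} (P : Matrix (Fin p × Fin n) κ ℝ) (l : Fin p) :
    Matrix (Fin n) κ ℝ := Matrix.of fun r c => P (l, r) c

/-- `δ_{ij} Iₙ`. -/
def deltaId (n : ℕ) {p : ℕ} (i j : Fin p) : Matrix (Fin n) (Fin n) ℝ :=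
  if i = j then 1 else 0

/-- Orlicz ψ₂ norm of a scalar random variable. -/
noncomputable def psi2 {Ω : Type*} [MeasurableSpace Ω] (μ : Measure Ω) (Y : Ω → ℝ) : ℝ :=
  sInf {t | 0 < t ∧ ∫ ω, Real.exp ((Y ω) ^ 2 / t ^ 2) ∂μ ≤ 2}

/-!
The error `h = x̂ - x` lies in the cone `‖h‖_{b1} ≤ 2k ‖h‖_{b∞}`: minimality of `x̂` against the
feasible point `x` forces the mass of `h` off the support of `x` to be at most its mass on the
support, which has at most `k` blocks. On that cone `‖h‖₂ ≤ √(2k) ‖h‖_{b∞}` and, by definition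
of `ω₂`, `ω₂(A,2k) ‖h‖_{b∞} ≤ ‖Ah‖₂`, while `‖Ah‖₂ ≤ 2ε` because both `x` and `x̂` are feasible.
-/

section Norms

variable {ι : Type*} [Fintype ι]

lemma vnorm_eq_norm_toLp (v : ι → ℝ) : vnorm v = ‖WithLp.toLp 2 v‖ := by
  simp [vnorm, EuclideanSpace.norm_eq, sq_abs]

lemma vnorm_nonneg (v : ι → ℝ) : 0 ≤ vnorm v :=
  Real.sqrt_nonneg _

lemma vnorm_zero : vnorm (0 : ι → ℝ) = 0 := by
  simp [vnorm]

lemma vnorm_pos {v : ι → ℝ} (hv : v ≠ 0) : 0 < vnorm v := by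
  rw [vnorm_eq_norm_toLp, norm_pos_iff, Ne, WithLp.toLp_eq_zero]
  exact hv

lemma vnorm_le_vnorm_add_add_vnorm (u v : ι → ℝ) : vnorm u ≤ vnorm (u + v) + vnorm v := by
  simp only [vnorm_eq_norm_toLp, WithLp.toLp_add]
  simpa using norm_sub_le (WithLp.toLp 2 u + WithLp.toLp 2 v) (WithLp.toLp 2 v)

lemma vnorm_sub_le_vnorm_sub_add_vnorm_sub (a b c : ι → ℝ) :
    vnorm (a - b) ≤ vnorm (c - a) + vnorm (c - b) := by
  simp only [vnorm_eq_norm_toLp, WithLp.toLp_sub]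
  calc ‖WithLp.toLp 2 a - WithLp.toLp 2 b‖
      ≤ ‖WithLp.toLp 2 a - WithLp.toLp 2 c‖ + ‖WithLp.toLp 2 c - WithLp.toLp 2 b‖ :=
        norm_sub_le_norm_sub_add_norm_sub _ _ _
    _ = _ := by rw [norm_sub_rev]

end Norms

section Blocks

variable {n p : ℕ}

lemma bnorm_nonneg (x : Fin p × Fin n → ℝ) (i : Fin p) : 0 ≤ bnorm x i :=
  vnorm_nonneg _

lemma bnorm_le_bnorm_add_add_bnorm (x h : Fin p × Fin n → ℝ) (i : Fin p) :
    bnorm x i ≤ bnorm (x + h) i + bnorm h i :=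
  vnorm_le_vnorm_add_add_vnorm _ _

lemma bnorm_le_blinf (x : Fin p × Fin n → ℝ) (i : Fin p) : bnorm x i ≤ blinf x :=
  le_ciSup (Set.finite_range _).bddAbove i

lemma blinf_nonneg (x : Fin p × Fin n → ℝ) : 0 ≤ blinf x :=
  Real.iSup_nonneg (bnorm_nonneg x)

lemma blinf_pos {x : Fin p × Fin n → ℝ} (hx : x ≠ 0) : 0 < blinf x := by
  obtain ⟨⟨i, j⟩, hij⟩ := Function.ne_iff.mp hx
  have hblock : (fun j => x (i, j)) ≠ 0 := Function.ne_iff.mpr ⟨j, hij⟩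
  exact (vnorm_pos hblock).trans_le (bnorm_le_blinf x i)

lemma vnorm_sq_eq_sum_bnorm_sq (x : Fin p × Fin n → ℝ) :
    vnorm x ^ 2 = ∑ i, bnorm x i ^ 2 := by
  simp only [vnorm, bnorm, Real.sq_sqrt (Finset.sum_nonneg fun _ _ => sq_nonneg _)]
  exact Fintype.sum_prod_type _

lemma vnorm_le_sqrt_mul_blinf {s : ℝ} {x : Fin p × Fin n → ℝ} (hx : bl1 x ≤ s * blinf x) :
    vnorm x ≤ √s * blinf x := by
  have hsq : vnorm x ^ 2 ≤ s * blinf x ^ 2 :=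
    calc vnorm x ^ 2 = ∑ i, bnorm x i ^ 2 := vnorm_sq_eq_sum_bnorm_sq x
      _ ≤ ∑ i, blinf x * bnorm x i := Finset.sum_le_sum fun i _ => by
          rw [sq]; exact mul_le_mul_of_nonneg_right (bnorm_le_blinf x i) (bnorm_nonneg x i)
      _ = blinf x * bl1 x := by rw [bl1, Finset.mul_sum]
      _ ≤ blinf x * (s * blinf x) := mul_le_mul_of_nonneg_left hx (blinf_nonneg x)
      _ = s * blinf x ^ 2 := by ring
  calc vnorm x = √(vnorm x ^ 2) := (Real.sqrt_sq (vnorm_nonneg x)).symm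
    _ ≤ √(s * blinf x ^ 2) := Real.sqrt_le_sqrt hsq
    _ = √s * blinf x := by rw [Real.sqrt_mul' s (sq_nonneg _), Real.sqrt_sq (blinf_nonneg x)]

lemma block_eq_zero_of_notMem_bsupp {x : Fin p × Fin n → ℝ} {i : Fin p} (hi : i ∉ bsupp x)
    (j : Fin n) : x (i, j) = 0 := by
  by_contra hij
  exact hi (by simpa [bsupp] using ⟨j, hij⟩)

lemma bnorm_add_of_notMem_bsupp {x : Fin p × Fin n → ℝ} {i : Fin p} (hi : i ∉ bsupp x)
    (h : Fin p × Fin n → ℝ) : bnorm (x + h) i = bnorm h i := by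
  simp [bnorm, block_eq_zero_of_notMem_bsupp hi]

lemma bl1_eq_sum_bsupp (x : Fin p × Fin n → ℝ) : bl1 x = ∑ i ∈ bsupp x, bnorm x i := by
  refine (Finset.sum_subset (Finset.subset_univ _) fun i _ hi => ?_).symm
  simp [bnorm, vnorm, block_eq_zero_of_notMem_bsupp hi]

lemma sum_compl_bsupp_bnorm_le {x h : Fin p × Fin n → ℝ} (hle : bl1 (x + h) ≤ bl1 x) :
    ∑ i ∈ (bsupp x)ᶜ, bnorm h i ≤ ∑ i ∈ bsupp x, bnorm h i := by
  set S := bsupp x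
  have hsplit : bl1 (x + h) = ∑ i ∈ S, bnorm (x + h) i + ∑ i ∈ Sᶜ, bnorm h i := by
    rw [bl1, ← Finset.sum_add_sum_compl S]
    congr 1
    exact Finset.sum_congr rfl fun i hi => bnorm_add_of_notMem_bsupp (Finset.mem_compl.mp hi) h
  have hrev : ∑ i ∈ S, bnorm x i ≤ ∑ i ∈ S, bnorm (x + h) i + ∑ i ∈ S, bnorm h i := by
    rw [← Finset.sum_add_distrib]
    exact Finset.sum_le_sum fun i _ => bnorm_le_bnorm_add_add_bnorm x h i
  rw [bl1_eq_sum_bsupp x] at hle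
  linarith

lemma bl1_le_two_mul_mul_blinf {k : ℕ} {x h : Fin p × Fin n → ℝ} (hk : (bsupp x).card ≤ k)
    (hle : bl1 (x + h) ≤ bl1 x) : bl1 h ≤ 2 * k * blinf h := by
  have hS : ∑ i ∈ bsupp x, bnorm h i ≤ k * blinf h :=
    calc ∑ i ∈ bsupp x, bnorm h i ≤ ∑ _i ∈ bsupp x, blinf h :=
          Finset.sum_le_sum fun i _ => bnorm_le_blinf h i
      _ = (bsupp x).card * blinf h := by rw [Finset.sum_const, nsmul_eq_mul]
      _ ≤ k * blinf h := mul_le_mul_of_nonneg_right (by exact_mod_cast hk) (blinf_nonneg h)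
  rw [bl1, ← Finset.sum_add_sum_compl (bsupp x)]
  linarith [sum_compl_bsupp_bnorm_le hle]

end Blocks

section Omega

variable {m n p : ℕ} (A : Matrix (Fin m) (Fin p × Fin n) ℝ)

lemma omega2_le_div {s : ℝ} {z : Fin p × Fin n → ℝ} (hz : z ≠ 0) (hcone : bl1 z ≤ s * blinf z) :
    omega2 A s ≤ vnorm (A *ᵥ z) / blinf z := by
  refine csInf_le ⟨0, ?_⟩ ⟨z, hz, hcone, rfl⟩
  rintro r ⟨z', -, -, rfl⟩
  exact div_nonneg (vnorm_nonneg _) (blinf_nonneg z')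

lemma vnorm_le_sqrt_mul_div_omega2 {s : ℝ} (hω : 0 < omega2 A s) {z : Fin p × Fin n → ℝ}
    (hcone : bl1 z ≤ s * blinf z) : vnorm z ≤ √s * vnorm (A *ᵥ z) / omega2 A s := by
  rcases eq_or_ne z 0 with rfl | hz
  · rw [vnorm_zero]
    exact div_nonneg (mul_nonneg (Real.sqrt_nonneg s) (vnorm_nonneg _)) hω.le
  have hblinf : blinf z ≤ vnorm (A *ᵥ z) / omega2 A s := by
    rw [le_div_iff₀ hω, mul_comm, ← le_div_iff₀ (blinf_pos hz)]
    exact omega2_le_div A hz hcone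
  calc vnorm z ≤ √s * blinf z := vnorm_le_sqrt_mul_blinf hcone
    _ ≤ √s * (vnorm (A *ᵥ z) / omega2 A s) :=
        mul_le_mul_of_nonneg_left hblinf (Real.sqrt_nonneg s)
    _ = √s * vnorm (A *ᵥ z) / omega2 A s := (mul_div_assoc _ _ _).symm

end Omega

/-- Corollary 2, BS-BP: `‖x̂ - x‖₂ ≤ 2√(2k) ε / ω₂(A, 2k)`. -/
theorem stmt8 {m n p k : ℕ} (A : Matrix (Fin m) (Fin p × Fin n) ℝ)
    (x : Fin p × Fin n → ℝ) (w y : Fin m → ℝ) (xhat : Fin p × Fin n → ℝ) (ε : ℝ)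
    (hsparse : (bsupp x).card ≤ k)
    (hy : y = A.mulVec x + w)
    (hw : vnorm w ≤ ε)
    (hfeas : vnorm (y - A.mulVec xhat) ≤ ε)
    (hmin : ∀ z : Fin p × Fin n → ℝ, vnorm (y - A.mulVec z) ≤ ε → bl1 xhat ≤ bl1 z)
    (hω : 0 < omega2 A (2 * k)) :
    vnorm (xhat - x) ≤ 2 * Real.sqrt (2 * k) * ε / omega2 A (2 * k) := by
  have hxfeas : vnorm (y - A *ᵥ x) ≤ ε := by rwa [hy, add_sub_cancel_left]
  have hcone : bl1 (xhat - x) ≤ 2 * k * blinf (xhat - x) := by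
    refine bl1_le_two_mul_mul_blinf hsparse ?_
    rw [add_sub_cancel]
    exact hmin x hxfeas
  have hA : vnorm (A *ᵥ (xhat - x)) ≤ 2 * ε := by
    rw [Matrix.mulVec_sub]
    linarith [vnorm_sub_le_vnorm_sub_add_vnorm_sub (A *ᵥ xhat) (A *ᵥ x) y]
  calc vnorm (xhat - x) ≤ √(2 * k) * vnorm (A *ᵥ (xhat - x)) / omega2 A (2 * k) :=
        vnorm_le_sqrt_mul_div_omega2 A hω hcone
    _ ≤ √(2 * k) * (2 * ε) / omega2 A (2 * k) := by gcongr
    _ = 2 * √(2 * k) * ε / omega2 A (2 * k) := by ring
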